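/- Let X be a universe with at least two elements and let 𝓛 be a concept class over X that contains the class Sg(X) = {{x} : x ∈ X} of all singletons. Then PBTD(𝓛) = 1 if and only if one of the following holds: (i) 𝓛 = Sg(X); (ii) 𝓛 = Sg(X) ∪ {∅}; (iii) 𝓛 = Sg(X) ∪ {{q, q′}} for some pair of distinct elements q, q′ ∈ X. -/

import Mathlib

/-!
Fix a strict order `≺` under which every concept is taught by at most one example, and say that
`{u}` is taught negatively by `z` if the example `(z, −)` teaches it. Then every singleton other
than `{u}` and `{z}` lies below `{u}`, so for distinct `u`, `v` taught negatively by `z`, `w` we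
get `v = z` or `u = w`. If a concept `L` has two points, teaching `L` with one example forces
`{u} ≺ L` for some `u ∈ L`, and then `{u}` can only be taught negatively, by a point of `L`.
Chasing these negative teachers through a third point of `L` produces a `≺`-cycle, so `L` is a
pair; the same bookkeeping excludes two distinct pairs, and a pair together with `∅`.
Conversely, reverse inclusion teaches `Sg(X) ∪ {∅}`, and comparing traces on `{q, q'}` teaches
`Sg(X) ∪ {{q, q'}}`, with one example per concept.
-/

namespace PBT

variable {X : Type*}

/-- A set `L ⊆ X` is consistent with a set `T` of labeled examples
(label `true` = “+”, label `false` = “−”). -/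
def Consistent (L : Set X) (T : Set (X × Bool)) : Prop :=
  ∀ p ∈ T, (p.2 = true → p.1 ∈ L) ∧ (p.2 = false → p.1 ∉ L)

/-- `T` is a teaching set for `L` w.r.t. the concept class `𝓛`:
`L` is the only concept in `𝓛` that is consistent with `T`. -/
def IsTeachingSet (𝓛 : Set (Set X)) (L : Set X) (T : Set (X × Bool)) : Prop :=
  Consistent L T ∧ ∀ L' ∈ 𝓛, Consistent L' T → L' = L

/-- `TD L 𝓛`: least size of a finite teaching set for `L` w.r.t. `𝓛` (`⊤` if none exists). -/
noncomputable def TD (L : Set X) (𝓛 : Set (Set X)) : ℕ∞ :=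
  sInf {n : ℕ∞ | ∃ T : Finset (X × Bool), IsTeachingSet 𝓛 L ↑T ∧ n = T.card}

/-- A positive teaching set, identified with its set of (positively labeled) points. -/
def IsPosTeachingSet (𝓛 : Set (Set X)) (L : Set X) (S : Set X) : Prop :=
  S ⊆ L ∧ ∀ L' ∈ 𝓛, S ⊆ L' → L' = L

/-- least size of a finite positive teaching set for `L` w.r.t. `𝓛` (`⊤` if none exists). -/
noncomputable def TDpos (L : Set X) (𝓛 : Set (Set X)) : ℕ∞ :=
  sInf {n : ℕ∞ | ∃ S : Finset X, IsPosTeachingSet 𝓛 L ↑S ∧ n = S.card}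

/-- A strict partial order (preference relation) on concepts:
`pr L' L` means `L` is strictly preferred over `L'`. -/
def StrictPO (pr : Set X → Set X → Prop) : Prop :=
  (∀ A, ¬ pr A A) ∧ ∀ A B C : Set X, pr A B → pr B C → pr A C

/-- `PBTDord 𝓛 pr = sup_{L ∈ 𝓛} TD(L, 𝓛 \ {L' ∈ 𝓛 | pr L' L})`. -/
noncomputable def PBTDord (𝓛 : Set (Set X)) (pr : Set X → Set X → Prop) : ℕ∞ :=
  ⨆ L ∈ 𝓛, TD L {L' ∈ 𝓛 | ¬ pr L' L}

/-- preference-based teaching dimension of `𝓛`. -/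
noncomputable def PBTD (𝓛 : Set (Set X)) : ℕ∞ :=
  sInf {v : ℕ∞ | ∃ pr, StrictPO pr ∧ v = PBTDord 𝓛 pr}

/-- `PBTDposOrd 𝓛 pr = sup_{L ∈ 𝓛} TD⁺(L, 𝓛 \ {L' ∈ 𝓛 | pr L' L})`. -/
noncomputable def PBTDposOrd (𝓛 : Set (Set X)) (pr : Set X → Set X → Prop) : ℕ∞ :=
  ⨆ L ∈ 𝓛, TDpos L {L' ∈ 𝓛 | ¬ pr L' L}

/-- positive preference-based teaching dimension of `𝓛`. -/
noncomputable def PBTDpos (𝓛 : Set (Set X)) : ℕ∞ :=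
  sInf {v : ℕ∞ | ∃ pr, StrictPO pr ∧ v = PBTDposOrd 𝓛 pr}

theorem sInf_le_iff_exists_le {s : Set ℕ∞} {n : ℕ∞} (hn : n ≠ ⊤) :
    sInf s ≤ n ↔ ∃ v ∈ s, v ≤ n := by
  refine ⟨fun h => ?_, fun ⟨v, hv, hvn⟩ => sInf_le_of_le hv hvn⟩
  obtain rfl | hs := s.eq_empty_or_nonempty
  · exact absurd (top_le_iff.1 (sInf_empty (α := ℕ∞) ▸ h)) hn
  · exact ⟨sInf s, csInf_mem hs, h⟩

section Teaching

variable {𝓒 : Set (Set X)} {L : Set X}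

inductive TeachableWithOne (𝓒 : Set (Set X)) (L : Set X) : Prop
  | empty : (∀ L' ∈ 𝓒, L' = L) → TeachableWithOne 𝓒 L
  | pos (x : X) : x ∈ L → (∀ L' ∈ 𝓒, x ∈ L' → L' = L) → TeachableWithOne 𝓒 L
  | neg (z : X) : z ∉ L → (∀ L' ∈ 𝓒, z ∉ L' → L' = L) → TeachableWithOne 𝓒 L

theorem TeachableWithOne.mono {𝓒' : Set (Set X)} (hT : TeachableWithOne 𝓒 L) (h : 𝓒' ⊆ 𝓒) :
    TeachableWithOne 𝓒' L := by
  cases hT with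
  | empty hall => exact .empty fun L' hL' => hall L' (h hL')
  | pos x hx hall => exact .pos x hx fun L' hL' => hall L' (h hL')
  | neg z hz hall => exact .neg z hz fun L' hL' => hall L' (h hL')

@[simp]
theorem consistent_empty : Consistent L ∅ := by
  simp [Consistent]

@[simp]
theorem consistent_singleton_true {x : X} : Consistent L {(x, true)} ↔ x ∈ L := by
  simp [Consistent]

@[simp]
theorem consistent_singleton_false {x : X} : Consistent L {(x, false)} ↔ x ∉ L := by
  simp [Consistent]

theorem TD_le_iff {n : ℕ∞} (hn : n ≠ ⊤) :
    TD L 𝓒 ≤ n ↔ ∃ T : Finset (X × Bool), IsTeachingSet 𝓒 L T ∧ (T.card : ℕ∞) ≤ n := by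
  simp only [TD, sInf_le_iff_exists_le hn, Set.mem_ofPred_eq]
  constructor
  · rintro ⟨_, ⟨T, hT, rfl⟩, hn⟩
    exact ⟨T, hT, hn⟩
  · rintro ⟨T, hT, hn⟩
    exact ⟨_, ⟨T, hT, rfl⟩, hn⟩

theorem TD_le_one_iff : TD L 𝓒 ≤ 1 ↔ TeachableWithOne 𝓒 L := by
  rw [TD_le_iff ENat.one_ne_top]
  constructor
  · rintro ⟨T, ⟨hcons, huniq⟩, hcard⟩
    rcases Nat.le_one_iff_eq_zero_or_eq_one.1 (by exact_mod_cast hcard) with hcard | hcard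
    · obtain rfl := Finset.card_eq_zero.1 hcard
      exact .empty fun L' hL' => huniq L' hL' (by simp)
    · obtain ⟨⟨x, _ | _⟩, rfl⟩ := Finset.card_eq_one.1 hcard
      · exact .neg x (by simpa using hcons) fun L' hL' hx => huniq L' hL' (by simpa using hx)
      · exact .pos x (by simpa using hcons) fun L' hL' hx => huniq L' hL' (by simpa using hx)
  · rintro (hall | ⟨x, hx, hall⟩ | ⟨z, hz, hall⟩)
    · exact ⟨∅, ⟨by simp, fun L' hL' _ => hall L' hL'⟩, by simp⟩
    · exact ⟨{(x, true)}, ⟨by simpa using hx, fun L' hL' h => hall L' hL' (by simpa using h)⟩,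
        by simp⟩
    · exact ⟨{(z, false)}, ⟨by simpa using hz, fun L' hL' h => hall L' hL' (by simpa using h)⟩,
        by simp⟩

theorem one_le_TD {L' : Set X} (hL' : L' ∈ 𝓒) (hne : L' ≠ L) : 1 ≤ TD L 𝓒 := by
  rw [Order.one_le_iff_ne_zero, Ne, ← nonpos_iff_eq_zero, TD_le_iff ENat.zero_ne_top]
  rintro ⟨T, hT, hcard⟩
  obtain rfl : T = ∅ := Finset.card_eq_zero.1 (Nat.le_zero.1 (by exact_mod_cast hcard))
  exact hne (hT.2 L' hL' (by simp))

end Teaching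

section Order

variable {pr : Set X → Set X → Prop} {A B C : Set X}

theorem StrictPO.trans (hpo : StrictPO pr) (hAB : pr A B) (hBC : pr B C) : pr A C :=
  hpo.2 A B C hAB hBC

theorem StrictPO.asymm (hpo : StrictPO pr) (hAB : pr A B) : ¬ pr B A :=
  fun hBA => hpo.1 A (hpo.trans hAB hBA)

end Order

structure IsOneTeachingOrder (𝓛 : Set (Set X)) (pr : Set X → Set X → Prop) : Prop where
  strictPO : StrictPO pr
  teachable : ∀ L ∈ 𝓛, TeachableWithOne {L' ∈ 𝓛 | ¬ pr L' L} L

theorem IsOneTeachingOrder.mono {𝓛 𝓛' : Set (Set X)} {pr : Set X → Set X → Prop}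
    (h : IsOneTeachingOrder 𝓛 pr) (h𝓛 : 𝓛' ⊆ 𝓛) : IsOneTeachingOrder 𝓛' pr :=
  ⟨h.strictPO, fun L hL => (h.teachable L (h𝓛 hL)).mono fun _ hM => ⟨h𝓛 hM.1, hM.2⟩⟩

section PBTD

variable {𝓛 : Set (Set X)}

theorem PBTD_le_one_iff : PBTD 𝓛 ≤ 1 ↔ ∃ pr, IsOneTeachingOrder 𝓛 pr := by
  simp only [PBTD, sInf_le_iff_exists_le ENat.one_ne_top, Set.mem_ofPred_eq]
  constructor
  · rintro ⟨_, ⟨pr, hpo, rfl⟩, h⟩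
    exact ⟨pr, hpo, fun L hL => TD_le_one_iff.1 (iSup₂_le_iff.1 h L hL)⟩
  · rintro ⟨pr, hpo, h⟩
    exact ⟨_, ⟨pr, hpo, rfl⟩, iSup₂_le fun L hL => TD_le_one_iff.2 (h L hL)⟩

theorem one_le_PBTD (hX : ∃ x y : X, x ≠ y) (hsg : ∀ x : X, ({x} : Set X) ∈ 𝓛) :
    1 ≤ PBTD 𝓛 := by
  refine le_sInf ?_
  rintro _ ⟨pr, hpo, rfl⟩
  obtain ⟨x, y, hxy⟩ := hX
  by_cases hyx : pr {y} {x}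
  · exact le_iSup₂_of_le {y} (hsg y)
      (one_le_TD (L' := {x}) ⟨hsg x, hpo.asymm hyx⟩ (by simpa using hxy))
  · exact le_iSup₂_of_le {x} (hsg x)
      (one_le_TD (L' := {y}) ⟨hsg y, hyx⟩ (by simpa using hxy.symm))

end PBTD

def TaughtByNeg (𝓛 : Set (Set X)) (pr : Set X → Set X → Prop) (u z : X) : Prop :=
  z ≠ u ∧ ∀ M ∈ 𝓛, ¬ pr M {u} → z ∉ M → M = {u}

section Classification

variable {𝓛 : Set (Set X)} {pr : Set X → Set X → Prop} {L M : Set X} {u z v w : X}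

theorem TaughtByNeg.lt_of_notMem (hu : TaughtByNeg 𝓛 pr u z) (hM : M ∈ 𝓛) (hzM : z ∉ M)
    (hMu : M ≠ {u}) : pr M {u} :=
  by_contra fun h => hMu (hu.2 M hM h hzM)

theorem TaughtByNeg.singleton_lt (hsg : ∀ x : X, ({x} : Set X) ∈ 𝓛) (hu : TaughtByNeg 𝓛 pr u z)
    (hvu : v ≠ u) (hvz : v ≠ z) : pr {v} {u} :=
  hu.lt_of_notMem (hsg v) (by simpa using hvz.symm) (by simpa using hvu)

namespace IsOneTeachingOrder

theorem eq_or_eq_of_taughtByNeg (h : IsOneTeachingOrder 𝓛 pr) (hsg : ∀ x : X, ({x} : Set X) ∈ 𝓛)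
    (hu : TaughtByNeg 𝓛 pr u z) (hv : TaughtByNeg 𝓛 pr v w) (huv : u ≠ v) : v = z ∨ u = w := by
  by_contra! hne
  exact h.strictPO.asymm (hu.singleton_lt hsg huv.symm hne.1) (hv.singleton_lt hsg huv hne.2)

theorem eq_of_taughtByNeg (h : IsOneTeachingOrder 𝓛 pr) (hsg : ∀ x : X, ({x} : Set X) ∈ 𝓛)
    (hu : TaughtByNeg 𝓛 pr u z) (hv : TaughtByNeg 𝓛 pr v z) : u = v := by
  by_contra huv
  rcases h.eq_or_eq_of_taughtByNeg hsg hu hv huv with rfl | rfl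
  exacts [hv.1 rfl, hu.1 rfl]

theorem exists_taughtByNeg (h : IsOneTeachingOrder 𝓛 pr) (hsg : ∀ x : X, ({x} : Set X) ∈ 𝓛)
    (hL : L ∈ 𝓛) (hu : u ∈ L) (hLu : L ≠ {u}) (hlt : pr {u} L) :
    ∃ z ∈ L, TaughtByNeg 𝓛 pr u z := by
  have hL' : L ∈ {L' ∈ 𝓛 | ¬ pr L' {u}} := ⟨hL, h.strictPO.asymm hlt⟩
  rcases h.teachable {u} (hsg u) with hall | ⟨x, rfl, hall⟩ | ⟨z, hz, hall⟩
  · exact absurd (hall L hL') hLu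
  · exact absurd (hall L hL' hu) hLu
  · by_cases hzL : z ∈ L
    · exact ⟨z, hzL, fun hzu => hz hzu, fun M hM hMu hzM => hall M ⟨hM, hMu⟩ hzM⟩
    · exact absurd (hall L hL' hzL) hLu

theorem exists_singleton_lt (h : IsOneTeachingOrder 𝓛 pr) (hsg : ∀ x : X, ({x} : Set X) ∈ 𝓛)
    (hL : L ∈ 𝓛) (hL2 : L.Nontrivial) : ∃ u ∈ L, pr {u} L := by
  by_contra! hnot
  have hmem : ∀ u ∈ L, {u} ∈ {L' ∈ 𝓛 | ¬ pr L' L} := fun u hu => ⟨hsg u, hnot u hu⟩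
  obtain ⟨a, ha⟩ := hL2.nonempty
  rcases h.teachable L hL with hall | ⟨x, hx, hall⟩ | ⟨z, hz, hall⟩
  · exact hL2.ne_singleton (hall _ (hmem a ha)).symm
  · exact hL2.ne_singleton (hall _ (hmem x hx) rfl).symm
  · exact hL2.ne_singleton (hall _ (hmem a ha) fun hza => hz (hza ▸ ha)).symm

theorem subset_pair (h : IsOneTeachingOrder 𝓛 pr) (hsg : ∀ x : X, ({x} : Set X) ∈ 𝓛)
    (hL : L ∈ 𝓛) (hu : u ∈ L) (hz : z ∈ L) (hlt : pr {u} L) (huz : TaughtByNeg 𝓛 pr u z) :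
    L ⊆ {u, z} := by
  intro w hw
  rw [Set.mem_insert_iff, Set.mem_singleton_iff]
  by_contra! hw'
  obtain ⟨hwu, hwz⟩ := hw'
  have hpr := h.strictPO
  -- `{w} ≺ {u}` forces `w` to be taught by `u`, so `{z} ≺ {w}`; then `z` is taught by `w`,
  -- so `{u} ≺ {z}`, closing a cycle.
  have hwu' : pr {w} {u} := huz.singleton_lt hsg hwu hwz
  obtain ⟨w', -, hww'⟩ := h.exists_taughtByNeg hsg hL hw
    (Set.nontrivial_of_mem_mem_ne hu hw (Ne.symm hwu)).ne_singleton (hpr.trans hwu' hlt)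
  obtain rfl : u = w' := (h.eq_or_eq_of_taughtByNeg hsg huz hww' (Ne.symm hwu)).resolve_left hwz
  have hzw : pr {z} {w} := hww'.singleton_lt hsg (Ne.symm hwz) huz.1
  obtain ⟨z', -, hzz'⟩ := h.exists_taughtByNeg hsg hL hz
    (Set.nontrivial_of_mem_mem_ne hu hz huz.1.symm).ne_singleton
    (hpr.trans hzw (hpr.trans hwu' hlt))
  obtain rfl : w = z' := (h.eq_or_eq_of_taughtByNeg hsg hww' hzz' hwz).resolve_left huz.1
  have huz' : pr {u} {z} := hzz'.singleton_lt hsg huz.1.symm (Ne.symm hwu)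
  exact hpr.1 _ (hpr.trans huz' (hpr.trans hzw hwu'))

theorem eq_empty_or_singleton_or_pair (h : IsOneTeachingOrder 𝓛 pr)
    (hsg : ∀ x : X, ({x} : Set X) ∈ 𝓛) (hL : L ∈ 𝓛) :
    L = ∅ ∨ (∃ x, L = {x}) ∨ ∃ u z, pr {u} L ∧ TaughtByNeg 𝓛 pr u z ∧ L = {u, z} := by
  rcases L.subsingleton_or_nontrivial with hL1 | hL2
  · exact hL1.eq_empty_or_singleton.imp_right Or.inl
  obtain ⟨u, hu, hlt⟩ := h.exists_singleton_lt hsg hL hL2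
  obtain ⟨z, hz, huz⟩ := h.exists_taughtByNeg hsg hL hu hL2.ne_singleton hlt
  refine Or.inr (Or.inr ⟨u, z, hlt, huz, (h.subset_pair hsg hL hu hz hlt huz).antisymm ?_⟩)
  exact Set.insert_subset hu (Set.singleton_subset_iff.2 hz)

theorem taughtByNeg_of_lt_pair (h : IsOneTeachingOrder 𝓛 pr)
    (hsg : ∀ x : X, ({x} : Set X) ∈ 𝓛) (huz : u ≠ z) (hL : ({u, z} : Set X) ∈ 𝓛)
    (hlt : pr {z} {u, z}) : TaughtByNeg 𝓛 pr z u := by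
  obtain ⟨w, hw, hzw⟩ := h.exists_taughtByNeg hsg hL (by simp)
    (Set.nontrivial_pair huz).ne_singleton hlt
  rcases hw with rfl | rfl
  exacts [hzw, absurd rfl hzw.1]

theorem eq_of_taughtByNeg_of_lt_pair (h : IsOneTeachingOrder 𝓛 pr)
    (hsg : ∀ x : X, ({x} : Set X) ∈ 𝓛) (huv : TaughtByNeg 𝓛 pr u v) (hvw : TaughtByNeg 𝓛 pr v w)
    (hL : ({v, w} : Set X) ∈ 𝓛) (hlt : pr {v} {v, w}) : w = u := by
  by_contra hwu
  have hpr := h.strictPO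
  have hwu' : pr {w} {u} := huv.singleton_lt hsg hwu hvw.1
  have huv' : pr {u} {v} := hvw.singleton_lt hsg huv.1.symm (Ne.symm hwu)
  have hwv : pr {w} {v, w} := hpr.trans hwu' (hpr.trans huv' hlt)
  exact hwu (h.eq_of_taughtByNeg hsg (h.taughtByNeg_of_lt_pair hsg hvw.1.symm hL hwv) huv)

theorem pair_eq_pair (h : IsOneTeachingOrder 𝓛 pr) (hsg : ∀ x : X, ({x} : Set X) ∈ 𝓛)
    {p o p' o' : X} (hL : ({p, o} : Set X) ∈ 𝓛) (hlt : pr {p} {p, o})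
    (hp : TaughtByNeg 𝓛 pr p o) (hL' : ({p', o'} : Set X) ∈ 𝓛) (hlt' : pr {p'} {p', o'})
    (hp' : TaughtByNeg 𝓛 pr p' o') : ({p, o} : Set X) = {p', o'} := by
  by_contra hne
  by_cases hpp' : p = p'
  · subst hpp'
    have ho : o ∉ ({p, o'} : Set X) := by
      rintro (hop | hoo')
      exacts [hp.1 hop, hne (by rw [hoo'])]
    exact h.strictPO.asymm hlt'
      (hp.lt_of_notMem hL' ho (Set.nontrivial_pair hp'.1.symm).ne_singleton)
  rcases h.eq_or_eq_of_taughtByNeg hsg hp hp' hpp' with rfl | rfl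
  · exact hne (by rw [h.eq_of_taughtByNeg_of_lt_pair hsg hp hp' hL' hlt', Set.pair_comm])
  · exact hne (by rw [h.eq_of_taughtByNeg_of_lt_pair hsg hp' hp hL hlt, Set.pair_comm])

theorem singleton_lt_empty_or (h : IsOneTeachingOrder 𝓛 pr) (hsg : ∀ x : X, ({x} : Set X) ∈ 𝓛)
    (he : ∅ ∈ 𝓛) (hvw : v ≠ w) : pr {v} ∅ ∨ pr {w} ∅ := by
  by_contra! hnot
  rcases h.teachable ∅ he with hall | ⟨x, hx, -⟩ | ⟨z, -, hall⟩
  · exact Set.singleton_ne_empty v (hall {v} ⟨hsg v, hnot.1⟩)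
  · exact hx
  · by_cases hvz : v = z
    · exact Set.singleton_ne_empty w (hall {w} ⟨hsg w, hnot.2⟩ (by simpa [← hvz] using hvw))
    · exact Set.singleton_ne_empty v (hall {v} ⟨hsg v, hnot.1⟩ (by simpa using Ne.symm hvz))

theorem empty_notMem_of_pair (h : IsOneTeachingOrder 𝓛 pr) (hsg : ∀ x : X, ({x} : Set X) ∈ 𝓛)
    {p o : X} (hL : ({p, o} : Set X) ∈ 𝓛) (hlt : pr {p} {p, o}) (hp : TaughtByNeg 𝓛 pr p o) :
    ∅ ∉ 𝓛 := by
  intro he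
  have hpr := h.strictPO
  have hep : pr ∅ {p} :=
    hp.lt_of_notMem he (Set.notMem_empty o) (Set.singleton_ne_empty p).symm
  rcases h.singleton_lt_empty_or hsg he hp.1.symm with hpe | hoe
  · exact hpr.asymm hpe hep
  · have ho := h.taughtByNeg_of_lt_pair hsg hp.1.symm hL (hpr.trans hoe (hpr.trans hep hlt))
    exact hpr.asymm hoe (ho.lt_of_notMem he (Set.notMem_empty p) (Set.singleton_ne_empty o).symm)

theorem eq_of_forall_ne_singleton (h : IsOneTeachingOrder 𝓛 pr)
    (hsg : ∀ x : X, ({x} : Set X) ∈ 𝓛) {M' : Set X} (hM : M ∈ 𝓛) (hM' : M' ∈ 𝓛)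
    (hMs : ∀ x, M ≠ {x}) (hM's : ∀ x, M' ≠ {x}) : M = M' := by
  rcases h.eq_empty_or_singleton_or_pair hsg hM with rfl | ⟨x, rfl⟩ | ⟨p, o, hlt, hp, rfl⟩
  · rcases h.eq_empty_or_singleton_or_pair hsg hM' with rfl | ⟨x, rfl⟩ | ⟨p, o, hlt, hp, rfl⟩
    exacts [rfl, absurd rfl (hM's x), absurd hM (h.empty_notMem_of_pair hsg hM' hlt hp)]
  · exact absurd rfl (hMs x)
  · rcases h.eq_empty_or_singleton_or_pair hsg hM' with
      rfl | ⟨x, rfl⟩ | ⟨p', o', hlt', hp', rfl⟩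
    exacts [absurd hM' (h.empty_notMem_of_pair hsg hM hlt hp), absurd rfl (hM's x),
      h.pair_eq_pair hsg hM hlt hp hM' hlt' hp']

theorem eq_singletons_or_union_empty_or_union_pair (h : IsOneTeachingOrder 𝓛 pr)
    (hsg : ∀ x : X, ({x} : Set X) ∈ 𝓛) :
    𝓛 = {S : Set X | ∃ x : X, S = {x}} ∨
      𝓛 = {S : Set X | ∃ x : X, S = {x}} ∪ {∅} ∨
      ∃ q q' : X, q ≠ q' ∧ 𝓛 = {S : Set X | ∃ x : X, S = {x}} ∪ {{q, q'}} := by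
  by_cases hall : ∀ M ∈ 𝓛, ∃ x, M = {x}
  · exact Or.inl (Set.ext fun S => ⟨hall S, fun ⟨x, hx⟩ => hx ▸ hsg x⟩)
  push Not at hall
  obtain ⟨M, hM, hMs⟩ := hall
  have h𝓛 : 𝓛 = {S : Set X | ∃ x : X, S = {x}} ∪ {M} := by
    ext S
    refine ⟨fun hS => ?_, ?_⟩
    · by_cases hSs : ∃ x, S = {x}
      · exact Or.inl hSs
      · push Not at hSs
        exact Or.inr (h.eq_of_forall_ne_singleton hsg hS hM hSs hMs)
    · rintro (⟨x, rfl⟩ | rfl)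
      exacts [hsg x, hM]
  rcases h.eq_empty_or_singleton_or_pair hsg hM with rfl | ⟨x, rfl⟩ | ⟨q, q', -, hqq', rfl⟩
  · exact Or.inr (Or.inl h𝓛)
  · exact absurd rfl (hMs x)
  · exact Or.inr (Or.inr ⟨q, q', hqq'.1.symm, h𝓛⟩)

end IsOneTeachingOrder

end Classification

theorem isOneTeachingOrder_singletons_union_empty :
    IsOneTeachingOrder ({S : Set X | ∃ x : X, S = {x}} ∪ {∅}) fun A B => B ⊂ A := by
  refine ⟨⟨fun A => ssubset_irrefl A, fun _ _ _ hAB hBC => hBC.trans hAB⟩, ?_⟩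
  rintro L (⟨x, rfl⟩ | rfl)
  · refine .pos x rfl ?_
    rintro L' ⟨⟨y, rfl⟩ | rfl, -⟩ hx
    exacts [by rw [hx], absurd hx (Set.notMem_empty x)]
  · exact .empty fun L' hL' => Set.not_nonempty_iff_eq_empty.1 fun hne =>
      hL'.2 (Set.empty_ssubset.2 hne)

theorem isOneTeachingOrder_singletons_union_pair {q q' : X} (hqq' : q ≠ q') :
    IsOneTeachingOrder ({S : Set X | ∃ x : X, S = {x}} ∪ {{q, q'}})
      fun A B => A ∩ {q, q'} ⊂ B ∩ {q, q'} := by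
  refine ⟨⟨fun A => ssubset_irrefl _, fun _ _ _ => ssubset_trans⟩, ?_⟩
  rintro L (⟨x, rfl⟩ | rfl)
  · by_cases hx : x ∈ ({q, q'} : Set X)
    · obtain ⟨x', hxx', hP⟩ : ∃ x', x' ≠ x ∧ ({q, q'} : Set X) = {x, x'} := by
        rcases hx with rfl | rfl
        exacts [⟨q', hqq'.symm, rfl⟩, ⟨q, hqq', Set.pair_comm _ _⟩]
      rw [hP]
      refine .neg x' (by simpa using hxx') ?_
      rintro L' ⟨⟨y, rfl⟩ | rfl, hL'⟩ hx'
      · obtain rfl | hyx := eq_or_ne y x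
        · rfl
        refine absurd ?_ hL'
        rw [Set.singleton_inter_eq_empty.2 (by simpa [hyx, eq_comm] using hx'),
          Set.singleton_inter_of_mem (by simp)]
        exact Set.empty_ssubset.2 (Set.singleton_nonempty x)
      · exact absurd (by simp) hx'
    · refine .pos x rfl ?_
      rintro L' ⟨⟨y, rfl⟩ | rfl, -⟩ hxL'
      exacts [by rw [hxL'], absurd hxL' hx]
  · refine .empty ?_
    rintro L' ⟨⟨y, rfl⟩ | rfl, hL'⟩
    · refine absurd ?_ hL'
      rw [Set.inter_self]
      exact Set.inter_subset_right.ssubset_of_not_subset fun hsub =>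
        (Set.nontrivial_pair hqq').not_subset_singleton (hsub.trans Set.inter_subset_left)
    · rfl

/-- For a class `𝓛` over a universe with at least two elements that contains all
singletons `Sg(X)`: `PBTD(𝓛) = 1` iff `𝓛 = Sg(X)`, or `𝓛 = Sg(X) ∪ {∅}`, or
`𝓛 = Sg(X) ∪ {{q,q'}}` for some distinct `q, q'`. -/
theorem pbtd_eq_one_of_singletons {X : Type*} (hX : ∃ x y : X, x ≠ y)
    (𝓛 : Set (Set X)) (hsg : ∀ x : X, ({x} : Set X) ∈ 𝓛) :
    PBTD 𝓛 = 1 ↔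
      (𝓛 = {S : Set X | ∃ x : X, S = {x}} ∨
       𝓛 = {S : Set X | ∃ x : X, S = {x}} ∪ {∅} ∨
       ∃ q q' : X, q ≠ q' ∧ 𝓛 = {S : Set X | ∃ x : X, S = {x}} ∪ {{q, q'}}) := by
  rw [← (one_le_PBTD hX hsg).ge_iff_eq', PBTD_le_one_iff]
  constructor
  · rintro ⟨pr, h⟩
    exact h.eq_singletons_or_union_empty_or_union_pair hsg
  · rintro (rfl | rfl | ⟨q, q', hqq', rfl⟩)
    · exact ⟨_, isOneTeachingOrder_singletons_union_empty.mono Set.subset_union_left⟩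
    · exact ⟨_, isOneTeachingOrder_singletons_union_empty⟩
    · exact ⟨_, isOneTeachingOrder_singletons_union_pair hqq'⟩

end PBT
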